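/- If G is an ancestral graph satisfying the boundary containment property, and π = (v, v_1, …, v_k, w) is a minimal-length m-connecting path between v and w given C that, among all minimal-length m-connecting paths, has the maximum number of non-endpoint vertices in C, then every non-endpoint vertex v_1, …, v_k on π is a collider that lies in C. -/

import Mathlib

/-- Possible edge types between an ordered pair of distinct vertices of a
simple mixed graph.  `arrowTo` at `(v, w)` means `v → w`, `arrowFrom` means
`v ← w`, `undir` means `v − w` and `bidir` means `v ↔ w`. -/
inductive EType : Type
  | none | undir | arrowTo | arrowFrom | bidir
deriving DecidableEq

/-- The edge type seen from the reversed ordered pair of vertices. -/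
def EType.mirror : EType → EType
  | .none => .none
  | .undir => .undir
  | .arrowTo => .arrowFrom
  | .arrowFrom => .arrowTo
  | .bidir => .bidir

/-- A simple mixed graph: at most one edge (undirected, directed or
bi-directed) between any two distinct vertices, and no self loops. -/
structure MixedGraph (V : Type) where
  E : V → V → EType
  no_loop : ∀ v, E v v = .none
  symm : ∀ v w, E w v = (E v w).mirror

/-- `(a, b, c)` are three consecutive vertices on the path `p`. -/
def ConsecTriple {V : Type} (p : List V) (a b c : V) : Prop :=
  ∃ l1 l2, p = l1 ++ a :: b :: c :: l2

namespace MixedGraph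

variable {V : Type} (G : MixedGraph V)

/-- `v − w` is an edge of `G`. -/
def Undir (v w : V) : Prop := G.E v w = .undir

/-- `v → w` is an edge of `G`. -/
def Dir (v w : V) : Prop := G.E v w = .arrowTo

/-- `v ↔ w` is an edge of `G`. -/
def Bidir (v w : V) : Prop := G.E v w = .bidir

/-- `v` and `w` are adjacent (joined by some edge). -/
def Adj (v w : V) : Prop := G.E v w ≠ .none

/-- The edge between `a` and `b` has an arrowhead at `b`. -/
def HeadAt (a b : V) : Prop := G.E a b = .arrowTo ∨ G.E a b = .bidir

/-- Closed boundary: `v` together with its adjacent vertices. -/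
def Bd (v : V) : Set V := insert v {w | G.Adj v w}

/-- A set of vertices is complete if all of its pairs of distinct
vertices are adjacent. -/
def Complete (S : Set V) : Prop := ∀ v ∈ S, ∀ w ∈ S, v ≠ w → G.Adj v w

/-- A vertex is simplicial if its closed boundary is complete. -/
def Simplicial (v : V) : Prop := G.Complete (G.Bd v)

/-- `v` is an ancestor of `w`: `v = w` or there is a directed path from
`v` to `w`. -/
def Anc (v w : V) : Prop := Relation.ReflTransGen G.Dir v w

/-- The set of ancestors of vertices in `C`. -/
def anSet (C : Set V) : Set V := {v | ∃ c ∈ C, G.Anc v c}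

/-- `G` is an ancestral graph. -/
def Ancestral : Prop :=
  (∀ v w, G.Dir v w → ¬ G.Anc w v) ∧
  (∀ v w, G.Undir v w → ∀ u, ¬ G.HeadAt u v) ∧
  (∀ v w, G.Bidir v w → ¬ G.Anc v w)

/-- The boundary containment property. -/
def BdContain : Prop :=
  (∀ v w, G.Undir v w → G.Bd v = G.Bd w) ∧
  (∀ v w, G.Dir v w → G.Bd v ⊆ G.Bd w)

/-- `b` is a collider between consecutive neighbours `a` and `c`. -/
def Collider (a b c : V) : Prop := G.HeadAt a b ∧ G.HeadAt c b

/-- A path: a list of distinct vertices, consecutive ones adjacent. -/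
def IsPath (p : List V) : Prop := p.Nodup ∧ p.Chain' G.Adj

/-- `p` is an m-connecting path given `C`: every non-collider on it is
outside `C` and every collider on it is an ancestor of `C`. -/
def IsMConnPath (C : Set V) (p : List V) : Prop :=
  G.IsPath p ∧
  ∀ a b c, ConsecTriple p a b c →
    (G.Collider a b c → b ∈ G.anSet C) ∧ (¬ G.Collider a b c → b ∉ C)

/-- `v` and `w` are m-connected given `C`. -/
def MConn (v w : V) (C : Set V) : Prop :=
  ∃ p, G.IsMConnPath C p ∧ p.head? = some v ∧ p.getLast? = some w

/-- `v` and `w` are m-separated given `C`. -/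
def MSep (v w : V) (C : Set V) : Prop := ¬ G.MConn v w C

/-- A maximal (ancestral) graph: every pair of distinct non-adjacent
vertices is m-separated given some set. -/
def Maximal : Prop :=
  ∀ v w, v ≠ w → ¬ G.Adj v w → ∃ C : Set V, v ∉ C ∧ w ∉ C ∧ G.MSep v w C

/-- `G` is a bi-directed graph. -/
def Bidirected : Prop := ∀ v w, G.E v w = .none ∨ G.E v w = .bidir

/-- `G` is an undirected graph. -/
def UndirectedG : Prop := ∀ v w, G.E v w = .none ∨ G.E v w = .undir

/-- `G` is a directed acyclic graph. -/
def IsDAG : Prop :=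
  (∀ v w, G.E v w = .none ∨ G.E v w = .arrowTo ∨ G.E v w = .arrowFrom) ∧
  (∀ v w, G.Dir v w → ¬ G.Anc w v)

/-- `G` and `H` have the same skeleton. -/
def SameSkeleton (H : MixedGraph V) : Prop := ∀ v w, G.Adj v w ↔ H.Adj v w

/-- `G` and `H` are Markov equivalent: their m-separation relations
coincide. -/
def MarkovEquiv (H : MixedGraph V) : Prop :=
  ∀ v w (C : Set V), v ≠ w → v ∉ C → w ∉ C → (G.MSep v w C ↔ H.MSep v w C)

open Classical in
/-- The edge map obtained from `G` by dropping all arrowheads at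
simplicial vertices. -/
noncomputable def dropE (v w : V) : EType :=
  match G.E v w with
  | .none => .none
  | .undir => .undir
  | .arrowTo => if G.Simplicial w then .undir else .arrowTo
  | .arrowFrom => if G.Simplicial v then .undir else .arrowFrom
  | .bidir =>
      if G.Simplicial v then (if G.Simplicial w then .undir else .arrowTo)
      else (if G.Simplicial w then .arrowFrom else .bidir)

/-- The graph obtained from `G` by dropping all arrowheads at simplicial
vertices; for a bi-directed graph `G` this is the simplicial graph `Gˢ`. -/
noncomputable def drop : MixedGraph V where
  E := G.dropE
  no_loop v := by simp [dropE, G.no_loop]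
  symm v w := by
    unfold dropE
    rw [G.symm v w]
    cases h : G.E v w <;>
      simp only [EType.mirror] <;> split_ifs <;> simp_all [EType.mirror]

open Classical in
/-- The edge map of the minimally oriented graph `G^min_<`: starting from
the simplicial graph, each bi-directed edge `v ↔ w` with `Bd v ⊆ Bd w`
and `v < w` is replaced by `v → w`. -/
noncomputable def gminE [LinearOrder V] (v w : V) : EType :=
  match G.dropE v w with
  | .bidir =>
      if G.Bd v ⊆ G.Bd w ∧ v < w then .arrowTo
      else if G.Bd w ⊆ G.Bd v ∧ w < v then .arrowFrom
      else .bidir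
  | e => e

/-- The graph `G^min_<` produced by Algorithm 4.2 from `G` and the total
order on `V`. -/
noncomputable def gmin [LinearOrder V] : MixedGraph V where
  E := G.gminE
  no_loop v := by
    have h := G.drop.no_loop v
    simp only [drop] at h
    simp [gminE, h]
  symm v w := by
    have h := G.drop.symm v w
    simp only [drop] at h
    unfold gminE
    rw [h]
    cases hE : G.dropE v w <;> simp only [EType.mirror]
    case bidir =>
      by_cases c1 : G.Bd v ⊆ G.Bd w ∧ v < w
      · have c2 : ¬ (G.Bd w ⊆ G.Bd v ∧ w < v) := fun h' => lt_asymm c1.2 h'.2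
        simp [c1, c2, EType.mirror]
      · by_cases c2 : G.Bd w ⊆ G.Bd v ∧ w < v
        · simp [c1, c2, EType.mirror]
        · simp [c1, c2, EType.mirror]

/-- Total number of arrowheads of `G`: the number of directed edges plus
twice the number of bi-directed edges. -/
noncomputable def arr : ℕ :=
  {p : V × V | G.Dir p.1 p.2}.ncard + {p : V × V | G.Bidir p.1 p.2}.ncard

end MixedGraph

/-- `Gm` is a minimally oriented graph for `G`. -/
def MinOriented {V : Type} (G Gm : MixedGraph V) : Prop :=
  Gm.Ancestral ∧ Gm.Maximal ∧ G.MarkovEquiv Gm ∧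
  ∀ H : MixedGraph V, H.Ancestral → H.Maximal → G.MarkovEquiv H → Gm.arr ≤ H.arr


/-!
Let `a, b, c` be consecutive on `p`. If `b` is not a collider, it has a tail towards a
neighbour, say `b → c` or `b − c`; boundary containment then makes `a` and `c` adjacent and
the path can be rerouted through this edge, contradicting minimality. If `b` is a collider
outside `C`, it is a proper ancestor of some `z ∈ C`; boundary containment makes `a` and `c`
adjacent to `z`, with arrowheads at `z`, and replacing `b` by `z` gives a shorter path or
one of the same length with one more vertex in `C`.

The new edge `x *→ z` can break the m-connection only at a collider `x ∈ C` with `x → z`.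
Then the predecessor of `x` is in `Bd x ⊆ Bd z` and again has an arrowhead at `z`, so the
path is rerouted from there instead, at the latest from the first vertex of the path.
-/

section ConsecTriple

variable {α : Type} {a b c x z : α}

theorem ConsecTriple.reverse {p : List α} (h : ConsecTriple p a b c) :
    ConsecTriple p.reverse c b a := by
  obtain ⟨l₁, l₂, rfl⟩ := h
  exact ⟨l₂.reverse, l₁.reverse, by simp⟩

theorem ConsecTriple.of_isInfix {l₁ l₂ : List α} (h : ConsecTriple l₁ a b c)
    (hl : l₁ <:+: l₂) : ConsecTriple l₂ a b c := by
  obtain ⟨s₁, s₂, rfl⟩ := h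
  obtain ⟨t₁, t₂, rfl⟩ := hl
  exact ⟨t₁ ++ s₁, s₂ ++ t₂, by simp⟩

theorem ConsecTriple.of_append_cons_cons {s t : List α}
    (h : ConsecTriple (s ++ x :: z :: t) a b c) :
    ConsecTriple (s ++ [x, z]) a b c ∨ ConsecTriple (x :: z :: t) a b c := by
  obtain ⟨l₁, l₂, h⟩ := h
  rcases List.append_eq_append_iff.1 h with ⟨m, rfl, hm⟩ | ⟨m, rfl, hm⟩
  · exact Or.inr ⟨m, l₂, hm⟩
  · rcases m with _ | ⟨a', _ | ⟨b', _ | ⟨c', m⟩⟩⟩ <;> simp only [List.nil_append,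
      List.cons_append, List.cons.injEq] at hm
    · exact Or.inr ⟨[], l₂, by simp [hm]⟩
    · obtain ⟨rfl, rfl, rfl, rfl⟩ := hm
      exact Or.inl ⟨l₁, [], by simp⟩
    · obtain ⟨rfl, rfl, rfl, rfl⟩ := hm
      exact Or.inl ⟨l₁, [z], by simp⟩
    · obtain ⟨rfl, rfl, rfl, rfl⟩ := hm
      exact Or.inl ⟨l₁, m ++ [x, z], by simp⟩

theorem not_consecTriple_pair {a' b' : α} : ¬ ConsecTriple [a', b'] a b c := by
  rintro ⟨l₁, l₂, h⟩
  have := congrArg List.length h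
  simp at this
  omega

theorem ConsecTriple.eq_of_triple {a' b' c' : α} (h : ConsecTriple [a', b', c'] a b c) :
    a = a' ∧ b = b' ∧ c = c' := by
  obtain ⟨_ | ⟨d, l₁⟩, l₂, h⟩ := h
  · simp only [List.nil_append, List.cons.injEq] at h
    exact ⟨h.1.symm, h.2.1.symm, h.2.2.1.symm⟩
  · have := congrArg List.length h
    simp at this
    omega

end ConsecTriple

namespace MixedGraph

variable {V : Type} {G : MixedGraph V} {C : Set V} {a b c t u x y z : V}

theorem E_eq_mirror {e : EType} (h : G.E x y = e) : G.E y x = e.mirror := by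
  rw [G.symm, h]

theorem adj_comm : G.Adj x y ↔ G.Adj y x := by
  unfold Adj
  rw [G.symm x y]
  cases G.E x y <;> simp [EType.mirror]

theorem HeadAt.adj (h : G.HeadAt x y) : G.Adj x y := by
  rcases h with h | h <;> simp [Adj, h]

theorem HeadAt.ne (h : G.HeadAt x y) : x ≠ y := by
  rintro rfl
  exact h.adj (G.no_loop x)

theorem Dir.not_headAt (h : G.Dir x y) : ¬ G.HeadAt y x := by
  rintro (h' | h') <;> simp [E_eq_mirror h, EType.mirror] at h'

theorem dir_or_undir_of_not_headAt (hxy : G.Adj x y) (h : ¬ G.HeadAt x y) :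
    G.Dir y x ∨ G.Undir y x := by
  unfold Dir Undir
  rcases hE : G.E x y <;> simp_all [Adj, HeadAt, E_eq_mirror hE, EType.mirror]

theorem Ancestral.not_anc_of_headAt (hA : G.Ancestral) (h : G.HeadAt x y) : ¬ G.Anc y x := by
  rcases h with h | h
  · exact hA.1 x y h
  · exact hA.2.2 y x (E_eq_mirror h)

theorem Ancestral.not_headAt_of_undir (hA : G.Ancestral) (h : G.Undir x y) : ¬ G.HeadAt u x :=
  hA.2.1 x y h u

theorem BdContain.bd_subset_of_anc (hB : G.BdContain) (h : G.Anc x y) : G.Bd x ⊆ G.Bd y := by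
  induction h with
  | refl => exact subset_rfl
  | tail _ hstep ih => exact ih.trans (hB.2 _ _ hstep)

theorem adj_of_bd_subset (hxy : G.Bd x ⊆ G.Bd y) (hxt : G.Adj x t)
    (hty : t ≠ y) : G.Adj t y := by
  rcases hxy (Set.mem_insert_of_mem _ hxt) with h | h
  · exact absurd h hty
  · exact adj_comm.1 h

theorem Ancestral.headAt_of_anc (hA : G.Ancestral) (hB : G.BdContain) (hxz : G.Anc x z)
    (hne : x ≠ z) (htx : G.HeadAt t x) : G.HeadAt t z ∧ (G.HeadAt x t ∨ G.Dir t z) := by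
  obtain ⟨e, -, hez⟩ : ∃ e, G.Anc x e ∧ G.Dir e z :=
    hxz.cases_tail.resolve_left (Ne.symm hne)
  have hxt : ¬ G.Anc x t := hA.not_anc_of_headAt htx
  have hzt : ¬ G.Anc z t := fun h => hxt (hxz.trans h)
  have hadj : G.Adj t z := adj_of_bd_subset (hB.bd_subset_of_anc hxz)
    (adj_comm.1 htx.adj) (by rintro rfl; exact hxt hxz)
  have hhead : G.HeadAt t z := by
    rcases h : G.E t z
    · exact absurd h hadj
    · exact absurd (Or.inl hez) (hA.not_headAt_of_undir (E_eq_mirror h))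
    · exact Or.inl h
    · exact (hzt (.single (E_eq_mirror h))).elim
    · exact Or.inr h
  refine ⟨hhead, ?_⟩
  rcases htx with htx | htx
  · refine Or.inr (hhead.resolve_right fun h => ?_)
    exact hA.2.2 t z h (Relation.ReflTransGen.head htx hxz)
  · exact Or.inl (Or.inr (E_eq_mirror htx))

def MConnAt (C : Set V) (a b c : V) : Prop :=
  (G.Collider a b c → b ∈ G.anSet C) ∧ (¬ G.Collider a b c → b ∉ C)

theorem mem_anSet_of_mem (h : x ∈ C) : x ∈ G.anSet C := ⟨x, h, .refl⟩

theorem MConnAt.symm (h : G.MConnAt C a b c) : G.MConnAt C c b a :=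
  ⟨fun hc => h.1 hc.symm, fun hc => h.2 fun h' => hc h'.symm⟩

theorem MConnAt.of_headAt_iff (h : G.MConnAt C a b c) (hc : G.HeadAt c b ↔ G.HeadAt t b) :
    G.MConnAt C a b t :=
  ⟨fun hcol => h.1 ⟨hcol.1, hc.2 hcol.2⟩, fun hcol => h.2 fun h' => hcol ⟨h'.1, hc.1 h'.2⟩⟩

theorem MConnAt.collider_of_mem (h : G.MConnAt C a b c) (hb : b ∈ C) : G.Collider a b c :=
  not_not.1 fun hcol => h.2 hcol hb

theorem mconnAt_of_not_headAt (hc : ¬ G.HeadAt c b) (hb : b ∉ C) : G.MConnAt C a b c :=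
  ⟨fun hcol => absurd hcol.2 hc, fun _ => hb⟩

theorem mconnAt_of_collider (hcol : G.Collider a b c) (hb : b ∈ G.anSet C) :
    G.MConnAt C a b c :=
  ⟨fun _ => hb, fun h => absurd hcol h⟩

theorem IsMConnPath.mconnAt {p : List V} (hp : G.IsMConnPath C p) (h : ConsecTriple p a b c) :
    G.MConnAt C a b c :=
  hp.2 a b c h

theorem IsMConnPath.reverse {p : List V} (hp : G.IsMConnPath C p) :
    G.IsMConnPath C p.reverse := by
  refine ⟨⟨List.nodup_reverse.2 hp.1.1, ?_⟩, fun a b c h => ?_⟩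
  · exact List.isChain_reverse.2 (hp.1.2.imp fun _ _ => adj_comm.1)
  · exact (hp.mconnAt (by simpa using h.reverse)).symm

theorem IsMConnPath.of_isInfix {l₁ l₂ : List V} (hp : G.IsMConnPath C l₂) (h : l₁ <:+: l₂) :
    G.IsMConnPath C l₁ :=
  ⟨⟨hp.1.1.sublist h.sublist, List.IsChain.infix hp.1.2 h⟩,
    fun _ _ _ ht => hp.mconnAt (ht.of_isInfix h)⟩

theorem IsMConnPath.append_cons_cons {s r : List V} (hs : G.IsMConnPath C (s ++ [x, z]))
    (hr : G.IsMConnPath C (x :: z :: r)) (hnd : (s ++ x :: z :: r).Nodup) :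
    G.IsMConnPath C (s ++ x :: z :: r) := by
  refine ⟨⟨hnd, ?_⟩, fun a b c h => ?_⟩
  · have hs' := List.isChain_append_cons_cons.1 hs.1.2
    have hr' := List.isChain_cons_cons.1 hr.1.2
    exact List.isChain_append_cons_cons.2 ⟨hs'.1, hr'.1, hr'.2⟩
  · rcases h.of_append_cons_cons with h | h
    · exact hs.mconnAt h
    · exact hr.mconnAt h

theorem isMConnPath_pair (hne : a ≠ b) (hab : G.Adj a b) : G.IsMConnPath C [a, b] :=
  ⟨⟨by simpa using hne, List.isChain_pair.2 hab⟩, fun _ _ _ h => absurd h not_consecTriple_pair⟩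

theorem isMConnPath_triple (hnd : [a, b, c].Nodup) (hab : G.Adj a b) (hbc : G.Adj b c)
    (h : G.MConnAt C a b c) : G.IsMConnPath C [a, b, c] := by
  refine ⟨⟨hnd, List.isChain_cons_cons.2 ⟨hab, List.isChain_pair.2 hbc⟩⟩, fun a' b' c' ht => ?_⟩
  obtain ⟨rfl, rfl, rfl⟩ := ht.eq_of_triple
  exact h

theorem IsMConnPath.replace_last {l : List V} (hp : G.IsMConnPath C (l ++ [x, y]))
    (hxz : G.Adj x z) (hz : z ∉ l ++ [x])
    (hlast : ∀ t ∈ l.getLast?, G.MConnAt C t x y → G.MConnAt C t x z) :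
    G.IsMConnPath C (l ++ [x, z]) := by
  have hnd : (l ++ [x, z]).Nodup := by
    have := hp.1.1
    simp only [List.nodup_append, List.nodup_cons, List.mem_cons, List.mem_append,
      List.not_mem_nil] at this hz ⊢
    grind
  rcases l.eq_nil_or_concat with rfl | ⟨l, t, rfl⟩
  · exact isMConnPath_pair (by simpa [eq_comm] using hz) hxz
  · have hpre : G.IsMConnPath C (l ++ [t, x]) := hp.of_isInfix ⟨[], [y], by simp⟩
    have htx : G.MConnAt C t x z :=
      hlast t (by simp) (hp.mconnAt ⟨l, [], by simp⟩)
    have hmid : G.IsMConnPath C [t, x, z] :=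
      isMConnPath_triple (hnd.sublist (by simp)) (List.isChain_append_cons_cons.1 hpre.1.2).2.1
        hxz htx
    simpa using hpre.append_cons_cons hmid (by simpa using hnd)

theorem IsMConnPath.replace_head {r : List V} (hp : G.IsMConnPath C (y :: x :: r))
    (hxz : G.Adj z x) (hz : z ∉ x :: r)
    (hhead : ∀ t ∈ r.head?, G.MConnAt C y x t → G.MConnAt C z x t) :
    G.IsMConnPath C (z :: x :: r) := by
  have h := (show G.IsMConnPath C (r.reverse ++ [x, y]) by simpa using hp.reverse).replace_last
    (adj_comm.1 hxz) (by simpa [and_comm] using hz)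
    (fun t ht h => (hhead t (by simpa using ht) h.symm).symm)
  simpa using h.reverse

/-- While `x → z` with `x ∈ C`, the vertex `x` is a collider on the path, so its predecessor
also sends an arrowhead into `z`, and one moves one step back. -/
theorem IsMConnPath.exists_prefix_headAt (hA : G.Ancestral) (hB : G.BdContain) {l : List V}
    (hp : G.IsMConnPath C (l ++ [x, y])) (hz : z ∉ l ++ [x]) (hxz : G.HeadAt x z)
    (hyx : G.HeadAt y x ∨ G.Dir x z) :
    ∃ l' x', l' ++ [x'] <+: l ++ [x] ∧ G.HeadAt x' z ∧ G.IsMConnPath C (l' ++ [x', z]) := by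
  induction l using List.reverseRecOn generalizing x y with
  | nil => exact ⟨[], x, List.prefix_rfl, hxz, isMConnPath_pair hxz.ne hxz.adj⟩
  | append_singleton l t ih =>
    have htxy : G.MConnAt C t x y := hp.mconnAt ⟨l, [], by simp⟩
    have hstop (htxz : G.MConnAt C t x z) :
        ∃ l' x', l' ++ [x'] <+: l ++ [t] ++ [x] ∧ G.HeadAt x' z ∧
          G.IsMConnPath C (l' ++ [x', z]) :=
      ⟨l ++ [t], x, List.prefix_rfl, hxz, hp.replace_last hxz.adj hz (by simp [htxz])⟩
    rcases hxz with hxz | hxz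
    · by_cases hxC : x ∈ C
      · obtain ⟨htz, hxt⟩ :=
          hA.headAt_of_anc hB (.single hxz) (HeadAt.ne (Or.inl hxz)) (htxy.collider_of_mem hxC).1
        obtain ⟨l', x', hpre, h⟩ :=
          ih (hp.of_isInfix ⟨[], [y], by simp⟩) (by simp at hz ⊢; tauto) htz hxt
        exact ⟨l', x', hpre.trans (List.prefix_append _ _), h⟩
      · exact hstop (mconnAt_of_not_headAt (Dir.not_headAt hxz) hxC)
    · have hyx : G.HeadAt y x := hyx.resolve_right (by simp [Dir, hxz])
      exact hstop (htxy.of_headAt_iff (iff_of_true hyx (Or.inr (E_eq_mirror hxz))))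

theorem IsMConnPath.exists_suffix_headAt (hA : G.Ancestral) (hB : G.BdContain) {r : List V}
    (hp : G.IsMConnPath C (y :: x :: r)) (hz : z ∉ x :: r) (hxz : G.HeadAt x z)
    (hyx : G.HeadAt y x ∨ G.Dir x z) :
    ∃ x' r', x' :: r' <:+ x :: r ∧ G.HeadAt x' z ∧ G.IsMConnPath C (z :: x' :: r') := by
  obtain ⟨l', x', hpre, hx'z, h⟩ :=
    (show G.IsMConnPath C (r.reverse ++ [x, y]) by simpa using hp.reverse).exists_prefix_headAt
      hA hB (by simpa [and_comm] using hz) hxz hyx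
  refine ⟨x', l'.reverse, ?_, hx'z, by simpa using h.reverse⟩
  rw [← List.reverse_prefix]
  simpa using hpre

def HasShorterMConnPath (C : Set V) (p : List V) : Prop :=
  ∃ q, G.IsMConnPath C q ∧ q.head? = p.head? ∧ q.getLast? = p.getLast? ∧ q.length < p.length

theorem HasShorterMConnPath.of_reverse {p : List V} (h : G.HasShorterMConnPath C p.reverse) :
    G.HasShorterMConnPath C p := by
  obtain ⟨q, hq, hh, hl, hlen⟩ := h
  exact ⟨q.reverse, hq.reverse, by simpa using hl, by simpa using hh, by simpa using hlen⟩

theorem hasShorterMConnPath_of_isPrefix_of_isSuffix {L L' m k R R' : List V}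
    (hq : G.IsMConnPath C (L' ++ k ++ R')) (hL : L' <+: L) (hR : R' <:+ R) (hL' : L' ≠ [])
    (hR' : R' ≠ []) (hlen : (L' ++ k ++ R').length < (L ++ m ++ R).length) :
    G.HasShorterMConnPath C (L ++ m ++ R) := by
  refine ⟨_, hq, ?_, ?_, hlen⟩
  · obtain ⟨t, rfl⟩ := hL
    simp only [List.append_assoc, List.head?_append_of_ne_nil _ hL']
  · obtain ⟨t, rfl⟩ := hR
    rw [List.getLast?_append_of_ne_nil _ hR', ← List.append_assoc,
      List.getLast?_append_of_ne_nil _ hR']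

theorem IsMConnPath.hasShorter_of_prefix {L l m r : List V}
    (hp : G.IsMConnPath C (L ++ m ++ z :: r)) (hm : m ≠ []) (hl : l ++ [x] <+: L)
    (hL : G.IsMConnPath C (l ++ [x, z])) (hR : G.IsMConnPath C (x :: z :: r)) :
    G.HasShorterMConnPath C (L ++ m ++ z :: r) := by
  have hsub : (l ++ [x] ++ z :: r).Sublist (L ++ (m ++ z :: r)) :=
    hl.sublist.append (List.sublist_append_right m (z :: r))
  have hq : G.IsMConnPath C (l ++ [x] ++ [] ++ z :: r) := by
    simpa using hL.append_cons_cons hR (hp.1.1.sublist (by simpa using hsub))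
  refine hasShorterMConnPath_of_isPrefix_of_isSuffix hq hl List.suffix_rfl (by simp) (by simp) ?_
  have := hl.length_le
  have := List.length_pos_of_ne_nil hm
  simp only [List.length_append, List.length_cons, List.length_nil] at *
  omega

/-- `u` plays the role of the vertex preceding `z` on the path. -/
theorem IsMConnPath.hasShorter_of_headAt (hA : G.Ancestral) (hB : G.BdContain)
    {l m r : List V} (hp : G.IsMConnPath C (l ++ x :: y :: m ++ z :: r)) (hxz : G.HeadAt x z)
    (hyx : G.HeadAt y x ∨ G.Dir x z) (hu : G.IsMConnPath C (u :: z :: r))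
    (huz : G.HeadAt u z ∨ z ∈ C) : G.HasShorterMConnPath C (l ++ x :: y :: m ++ z :: r) := by
  have hdisj : (l ++ [x]).Disjoint (y :: m ++ z :: r) :=
    List.disjoint_of_nodup_append (by simpa using hp.1.1)
  obtain ⟨l', x', hpre, hx'z, hL⟩ :=
    (hp.of_isInfix ⟨[], m ++ z :: r, by simp⟩).exists_prefix_headAt hA hB
      (fun hz => hdisj hz (by simp)) hxz hyx
  have hR : G.IsMConnPath C (x' :: z :: r) := by
    refine hu.replace_head hx'z.adj (fun hx' => hdisj
      (hpre.subset (List.mem_append_right _ (List.mem_singleton_self x'))) (by simp_all)) ?_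
    intro w _ h
    have huz : G.HeadAt u z := huz.elim id fun hzC => (h.collider_of_mem hzC).1
    exact (h.symm.of_headAt_iff (iff_of_true huz hx'z)).symm
  simpa using IsMConnPath.hasShorter_of_prefix (L := l ++ [x]) (m := y :: m) (by simpa using hp)
    (List.cons_ne_nil _ _) hpre hL hR

/-- The three cases provide what is needed to reroute the path through `a *→ c`, through
`c *→ a`, or through `a − c`. -/
theorem Ancestral.shortcut_cases (hA : G.Ancestral) (hB : G.BdContain) (hab : G.Adj a b)
    (hbc : G.Adj b c) (hac : a ≠ c) (hcb : ¬ G.HeadAt c b) :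
    (G.HeadAt a c ∧ (G.HeadAt b a ∨ G.Dir a c) ∧ G.HeadAt b c) ∨
    (G.HeadAt c a ∧ (G.HeadAt b c ∨ G.Dir c a) ∧ G.HeadAt b a) ∨
    (G.Adj a c ∧ ¬ G.HeadAt b a ∧ ¬ G.HeadAt c a ∧ ¬ G.HeadAt b c ∧ ¬ G.HeadAt a c) := by
  rcases dir_or_undir_of_not_headAt (adj_comm.1 hbc) hcb with hbc' | hbc'
  · have hac' : G.Adj a c :=
      adj_of_bd_subset (hB.2 b c hbc') (adj_comm.1 hab) hac
    by_cases hhac : G.HeadAt a c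
    · refine Or.inl ⟨hhac, ?_, Or.inl hbc'⟩
      rcases hhac with h | h
      · exact Or.inr h
      · refine Or.inl (not_not.1 fun hba => ?_)
        rcases dir_or_undir_of_not_headAt (adj_comm.1 hab) hba with h' | h'
        · exact hA.2.2 a c h (.head h' (.single hbc'))
        · exact hA.not_headAt_of_undir h' (Or.inr (E_eq_mirror h))
    · have hca : G.Dir c a := (dir_or_undir_of_not_headAt hac' hhac).resolve_right
        fun h => hA.not_headAt_of_undir h (Or.inl hbc')
      refine Or.inr (Or.inl ⟨Or.inl hca, Or.inr hca, not_not.1 fun hba => ?_⟩)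
      rcases dir_or_undir_of_not_headAt (adj_comm.1 hab) hba with h' | h'
      · exact hA.1 c a hca (.head h' (.single hbc'))
      · exact hA.not_headAt_of_undir h' (Or.inl hca)
  · have hac' : G.Adj a c :=
      adj_of_bd_subset (hB.1 b c hbc').le (adj_comm.1 hab) hac
    have hnoc : ∀ t, ¬ G.HeadAt t c := fun t => hA.not_headAt_of_undir (E_eq_mirror hbc')
    rcases dir_or_undir_of_not_headAt hab (hA.not_headAt_of_undir hbc') with hba | hba
    · have hca : G.Dir c a := (dir_or_undir_of_not_headAt hac' (hnoc a)).resolve_right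
        fun h => hA.not_headAt_of_undir (E_eq_mirror h) (Or.inl hba)
      exact Or.inr (Or.inl ⟨Or.inl hca, Or.inr hca, Or.inl hba⟩)
    · have hnoa : ∀ t, ¬ G.HeadAt t a := fun t => hA.not_headAt_of_undir (E_eq_mirror hba)
      exact Or.inr (Or.inr ⟨hac', hnoa b, hnoa c, hnoc b, hnoc a⟩)

theorem IsMConnPath.hasShorter_of_not_headAt (hA : G.Ancestral) (hB : G.BdContain)
    {l r : List V} (hp : G.IsMConnPath C (l ++ a :: b :: c :: r)) (hcb : ¬ G.HeadAt c b) :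
    G.HasShorterMConnPath C (l ++ a :: b :: c :: r) := by
  have hnd := hp.1.1
  simp only [List.nodup_append, List.nodup_cons, List.mem_cons] at hnd
  have hchain := List.isChain_append_cons_cons.1 hp.1.2
  have hbcr : G.IsMConnPath C (b :: c :: r) := hp.of_isInfix ⟨l ++ [a], [], by simp⟩
  have hbal : G.IsMConnPath C (b :: a :: l.reverse) :=
    hp.reverse.of_isInfix ⟨r.reverse ++ [c], [], by simp⟩
  rcases hA.shortcut_cases hB hchain.2.1 (List.isChain_cons_cons.1 hchain.2.2).1 (by grind)
    hcb with ⟨hac, hba, hbc⟩ | ⟨hca, hbc, hba⟩ | ⟨hac, hba, hca, hbc, hac'⟩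
  · simpa using IsMConnPath.hasShorter_of_headAt hA hB (l := l) (m := []) (z := c) (r := r)
      (by simpa using hp) hac hba hbcr (Or.inl hbc)
  · refine HasShorterMConnPath.of_reverse ?_
    simpa using IsMConnPath.hasShorter_of_headAt hA hB (l := r.reverse) (m := []) (z := a)
      (r := l.reverse) (by simpa using hp.reverse) hca hbc hbal (Or.inl hba)
  · have hL : G.IsMConnPath C (l ++ [a, c]) :=
      (hp.of_isInfix ⟨[], c :: r, by simp⟩).replace_last hac (by simp; grind)
        fun t _ h => h.of_headAt_iff (iff_of_false hba hca)
    have hR : G.IsMConnPath C (a :: c :: r) :=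
      hbcr.replace_head hac (by simp; grind)
        fun w _ h => (h.symm.of_headAt_iff (iff_of_false hbc hac')).symm
    simpa using IsMConnPath.hasShorter_of_prefix (L := l ++ [a]) (m := [b]) (by simpa using hp)
      (List.cons_ne_nil _ _) List.prefix_rfl hL hR

theorem IsMConnPath.hasShorter_of_not_collider (hA : G.Ancestral) (hB : G.BdContain)
    {l r : List V} (hp : G.IsMConnPath C (l ++ a :: b :: c :: r)) (hcol : ¬ G.Collider a b c) :
    G.HasShorterMConnPath C (l ++ a :: b :: c :: r) := by
  by_cases hcb : G.HeadAt c b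
  · have hab : ¬ G.HeadAt a b := fun hab => hcol ⟨hab, hcb⟩
    refine HasShorterMConnPath.of_reverse ?_
    simpa using (show G.IsMConnPath C (r.reverse ++ c :: b :: a :: l.reverse) by
      simpa using hp.reverse).hasShorter_of_not_headAt hA hB hab
  · exact hp.hasShorter_of_not_headAt hA hB hcb

theorem IsMConnPath.hasShorter_of_anc_mem_right (hA : G.Ancestral) (hB : G.BdContain)
    {l r : List V} (hp : G.IsMConnPath C (l ++ a :: b :: c :: r)) (hcol : G.Collider a b c)
    (hbz : G.Anc b z) (hne : b ≠ z) (hzC : z ∈ C) (hz : z ∈ r) :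
    G.HasShorterMConnPath C (l ++ a :: b :: c :: r) := by
  obtain ⟨s, r, rfl⟩ := List.append_of_mem hz
  obtain ⟨haz, hba⟩ := hA.headAt_of_anc hB hbz hne hcol.1
  obtain ⟨s', u, hs'⟩ : ∃ s' u, c :: s = s' ++ [u] :=
    ⟨_, _, (List.dropLast_append_getLast (List.cons_ne_nil c s)).symm⟩
  have hu : G.IsMConnPath C (u :: z :: r) :=
    hp.of_isInfix ⟨l ++ a :: b :: s', [], by
      rw [show c :: (s ++ z :: r) = c :: s ++ z :: r from rfl, hs']; simp⟩
  simpa using IsMConnPath.hasShorter_of_headAt hA hB (l := l) (m := c :: s) (z := z) (r := r)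
    (by simpa using hp) haz hba hu (Or.inr hzC)

theorem IsMConnPath.hasShorter_or_replace_of_not_mem (hA : G.Ancestral) (hB : G.BdContain)
    {l r : List V} (hp : G.IsMConnPath C (l ++ a :: b :: c :: r)) (hcol : G.Collider a b c)
    (hbz : G.Anc b z) (hne : b ≠ z) (hzC : z ∈ C) (hz : z ∉ l ++ a :: b :: c :: r) :
    G.HasShorterMConnPath C (l ++ a :: b :: c :: r) ∨
      G.IsMConnPath C (l ++ a :: z :: c :: r) := by
  obtain ⟨haz, hba⟩ := hA.headAt_of_anc hB hbz hne hcol.1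
  obtain ⟨hcz, hbc⟩ := hA.headAt_of_anc hB hbz hne hcol.2
  obtain ⟨l', x, hl, hxz, hL⟩ := (hp.of_isInfix (l₁ := l ++ [a, b]) ⟨[], c :: r, by simp⟩)
    |>.exists_prefix_headAt hA hB (by simp at hz ⊢; tauto) haz hba
  obtain ⟨y, r', hr, hyz, hR⟩ := (hp.of_isInfix (l₁ := b :: c :: r) ⟨l ++ [a], [], by simp⟩)
    |>.exists_suffix_headAt hA hB (by simp at hz ⊢; tauto) hcz hbc
  have hnd : (l' ++ [x] ++ [z] ++ (y :: r')).Nodup := by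
    refine List.Nodup.sublist ((hl.sublist.append_right _).append hr.sublist) ?_
    have := hp.1.1
    simp only [List.nodup_append, List.nodup_cons, List.mem_append, List.mem_cons] at this hz ⊢
    grind
  have hq : G.IsMConnPath C (l' ++ [x] ++ [z] ++ (y :: r')) := by
    have hxzy : G.IsMConnPath C [x, z, y] :=
      isMConnPath_triple (hnd.sublist (by simp)) hxz.adj (adj_comm.1 hyz.adj)
        (mconnAt_of_collider ⟨hxz, hyz⟩ (mem_anSet_of_mem hzC))
    simpa using hL.append_cons_cons (hxzy.append_cons_cons (s := [x]) hR
      (hnd.sublist (by simp))) (by simpa using hnd)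
  by_cases hlen : (l' ++ [x] ++ [z] ++ (y :: r')).length < (l ++ [a] ++ [b] ++ (c :: r)).length
  · refine Or.inl ?_
    simpa using hasShorterMConnPath_of_isPrefix_of_isSuffix (m := [b]) hq hl hr (by simp)
      (by simp) hlen
  · have hl' := hl.length_le
    have hr' := hr.length_le
    simp only [List.length_append, List.length_cons, List.length_nil] at hlen hl' hr'
    rw [hl.eq_of_length (by simp only [List.length_append, List.length_cons]; omega),
      hr.eq_of_length (by simp only [List.length_cons]; omega)] at hq
    exact Or.inr (by simpa using hq)

theorem IsMConnPath.hasShorter_or_exists_replace (hA : G.Ancestral) (hB : G.BdContain)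
    {l r : List V} (hp : G.IsMConnPath C (l ++ a :: b :: c :: r)) (hcol : G.Collider a b c)
    (hb : b ∉ C) :
    G.HasShorterMConnPath C (l ++ a :: b :: c :: r) ∨
      ∃ z ∈ C, G.IsMConnPath C (l ++ a :: z :: c :: r) := by
  obtain ⟨z, hzC, hbz⟩ := (hp.mconnAt ⟨l, r, rfl⟩).1 hcol
  have hne : b ≠ z := by rintro rfl; exact hb hzC
  by_cases hzr : z ∈ r
  · exact Or.inl (hp.hasShorter_of_anc_mem_right hA hB hcol hbz hne hzC hzr)
  by_cases hzl : z ∈ l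
  · refine Or.inl (HasShorterMConnPath.of_reverse ?_)
    simpa using (show G.IsMConnPath C (r.reverse ++ c :: b :: a :: l.reverse) by
      simpa using hp.reverse).hasShorter_of_anc_mem_right hA hB hcol.symm hbz hne hzC
        (by simpa using hzl)
  have hza : z ≠ a := (hA.headAt_of_anc hB hbz hne hcol.1).1.ne.symm
  have hzc : z ≠ c := (hA.headAt_of_anc hB hbz hne hcol.2).1.ne.symm
  rcases hp.hasShorter_or_replace_of_not_mem hA hB hcol hbz hne hzC (by simp; tauto) with h | h
  · exact Or.inl h
  · exact Or.inr ⟨z, hzC, h⟩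

end MixedGraph

theorem countP_interior_lt_of_replace {α : Type} (f : α → Bool) (l r : List α)
    {a b c z : α} (hb : f b = false) (hz : f z = true) :
    ((l ++ a :: b :: c :: r).drop 1).dropLast.countP f <
      ((l ++ a :: z :: c :: r).drop 1).dropLast.countP f := by
  have key (x : α) : ((l ++ a :: x :: c :: r).drop 1).dropLast =
      (l ++ [a]).drop 1 ++ x :: (c :: r).dropLast := by
    rw [show l ++ a :: x :: c :: r = l ++ [a] ++ x :: c :: r by simp,
      List.drop_append_of_le_length (by simp), List.dropLast_append_of_ne_nil (by simp),
      List.dropLast_cons_of_ne_nil (by simp)]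
  rw [key, key]
  simp [List.countP_append, hb, hz]

open Classical in
/-- In an ancestral graph with the boundary containment
property, if `p` is a minimal-length m-connecting path between `v` and
`w` given `C` that, among all minimal-length m-connecting paths, has the
maximum number of non-endpoint vertices in `C`, then every non-endpoint
vertex of `p` is a collider lying in `C`. -/
theorem stmt5 {V : Type} (G : MixedGraph V) (hA : G.Ancestral) (hB : G.BdContain)
    (v w : V) (C : Set V) (p : List V)
    (hp : G.IsMConnPath C p) (hh : p.head? = some v) (hl : p.getLast? = some w)
    (hmin : ∀ q, G.IsMConnPath C q → q.head? = some v → q.getLast? = some w →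
      p.length ≤ q.length)
    (hmax : ∀ q, G.IsMConnPath C q → q.head? = some v → q.getLast? = some w →
      q.length = p.length →
      ((q.drop 1).dropLast.countP fun x => decide (x ∈ C)) ≤
        ((p.drop 1).dropLast.countP fun x => decide (x ∈ C))) :
    ∀ a b c, ConsecTriple p a b c → G.Collider a b c ∧ b ∈ C := by
  rintro a b c ⟨l, r, rfl⟩
  have hshortest : ¬ G.HasShorterMConnPath C (l ++ a :: b :: c :: r) :=
    fun ⟨q, hq, hqh, hql, hlt⟩ => (hmin q hq (hqh.trans hh) (hql.trans hl)).not_gt hlt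
  have hcol : G.Collider a b c :=
    not_not.1 fun hcol => hshortest (hp.hasShorter_of_not_collider hA hB hcol)
  refine ⟨hcol, not_not.1 fun hb => ?_⟩
  rcases hp.hasShorter_or_exists_replace hA hB hcol hb with h | ⟨z, hzC, hq⟩
  · exact hshortest h
  · have hmore := hmax _ hq (by simpa using hh) (by simpa using hl) (by simp)
    have hless := countP_interior_lt_of_replace (fun x => decide (x ∈ C)) l r
      (a := a) (c := c) (by simpa using hb) (by simpa using hzC)
    omega
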